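/- arXiv:2412.03742 — 3 statements merged into one kernel-verified Lean document; each statement's English description precedes it below -/
import Mathlib

section
/- Let Z be a finite nonempty set and let 𝓘 be a family of subsets of Z satisfying properties (1)–(3) of the context. If I ∈ 𝓘 is not minimal, then there exist at least two distinct members J₁ ≠ J₂ of 𝓘 such that, for each i ∈ {1,2}, J_i ⊊ I and no K ∈ 𝓘 satisfies J_i ⊊ K ⊊ I (i.e. I has at least two maximal proper 𝓘-subsets). -/
open Finset

variable {α : Type*} [DecidableEq α]

/-- Properties (1)–(3) of the set system `𝓘` of subsets of `Z` underlying the bubble tree: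
(0) every member of `𝓘` is a subset of `Z`;
(1) `∅ ∉ 𝓘` and `Z ∈ 𝓘`;
(2) any two members of `𝓘` are either disjoint or one is contained in the other;
(3) whenever `I₁ ⊊ I₂` are members of `𝓘` with no member strictly between them,
    `I₂ \ I₁` is a union of finitely many pairwise disjoint members of `𝓘`. -/
def IsBubbleFamily (Z : Finset α) (𝓘 : Finset (Finset α)) : Prop :=
  (∀ I ∈ 𝓘, I ⊆ Z) ∧
  (∅ ∉ 𝓘) ∧ (Z ∈ 𝓘) ∧
  (∀ I₁ ∈ 𝓘, ∀ I₂ ∈ 𝓘, Disjoint I₁ I₂ ∨ I₁ ⊆ I₂ ∨ I₂ ⊆ I₁) ∧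
  (∀ I₁ ∈ 𝓘, ∀ I₂ ∈ 𝓘, I₁ ⊂ I₂ → (∀ K ∈ 𝓘, ¬(I₁ ⊂ K ∧ K ⊂ I₂)) →
    ∃ S : Finset (Finset α), ↑S ⊆ (𝓘 : Set (Finset α)) ∧
      (S : Set (Finset α)).Pairwise Disjoint ∧ I₂ \ I₁ = S.biUnion id)

/-- `I` is a minimal member of `𝓘`: it belongs to `𝓘` and no member of `𝓘` is a
proper subset of it. -/
def MinimalMem (𝓘 : Finset (Finset α)) (I : Finset α) : Prop :=
  I ∈ 𝓘 ∧ ∀ J ∈ 𝓘, ¬ J ⊂ I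

/-- There is a chain `I = c n ⊊ c (n-1) ⊊ ⋯ ⊊ c 0 = Z` of members of `𝓘`. -/
def HasChainTo (Z : Finset α) (𝓘 : Finset (Finset α)) (I : Finset α) (n : ℕ) : Prop :=
  ∃ c : ℕ → Finset α, c 0 = Z ∧ c n = I ∧ (∀ j ≤ n, c j ∈ 𝓘) ∧
    ∀ j < n, c (j + 1) ⊂ c j

/-- The depth of `I`: the largest `n` for which there is a chain
`I = I_n ⊊ I_{n-1} ⊊ ⋯ ⊊ I_0 = Z` of members of `𝓘`. -/
noncomputable def depth (Z : Finset α) (𝓘 : Finset (Finset α)) (I : Finset α) : ℕ :=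
  sSup {n | HasChainTo Z 𝓘 I n}

/-- Adjacency in the tree graph on `𝓘`: two distinct members are adjacent exactly when
one strictly contains the other and their depths differ by exactly `1`. -/
def TreeAdj (Z : Finset α) (𝓘 : Finset (Finset α)) (I J : Finset α) : Prop :=
  I ≠ J ∧ (I ⊂ J ∨ J ⊂ I) ∧
    (depth Z 𝓘 I = depth Z 𝓘 J + 1 ∨ depth Z 𝓘 J = depth Z 𝓘 I + 1)

/-- If `I ∈ 𝓘` is not minimal, then `I` has at least two distinct
maximal proper `𝓘`-subsets. -/
theorem two_maximal_proper_subsets (Z : Finset α) (𝓘 : Finset (Finset α))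
    (hZ : Z.Nonempty) (h𝓘 : IsBubbleFamily Z 𝓘) (I : Finset α) (hI : I ∈ 𝓘)
    (hnm : ¬ MinimalMem 𝓘 I) :
    ∃ J₁ ∈ 𝓘, ∃ J₂ ∈ 𝓘, J₁ ≠ J₂ ∧
      (J₁ ⊂ I ∧ ∀ K ∈ 𝓘, ¬(J₁ ⊂ K ∧ K ⊂ I)) ∧
      (J₂ ⊂ I ∧ ∀ K ∈ 𝓘, ¬(J₂ ⊂ K ∧ K ⊂ I)) := by
  obtain ⟨hsub, hne, hZm, hcomp, hsplit⟩ := h𝓘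
  -- J₀ : a proper subset of I in 𝓘
  have hJ0 : ∃ J ∈ 𝓘, J ⊂ I := by
    by_contra h
    push_neg at h
    exact hnm ⟨hI, fun J hJ => h J hJ⟩
  obtain ⟨J0, hJ0m, hJ0I⟩ := hJ0
  -- J₁ : maximal proper subset
  have hT1 : (𝓘.filter (· ⊂ I)).Nonempty := ⟨J0, by simp [hJ0m, hJ0I]⟩
  obtain ⟨J₁, hJ₁T, hJ₁max⟩ := (by obtain ⟨m, hm⟩ := Finset.exists_maximal hT1; exact ⟨m, hm.1, fun x hx hlt => (not_le_of_gt hlt) (hm.2 hx hlt.le)⟩ : ∃ m ∈ _, ∀ x ∈ _, ¬ m < x)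
  simp only [Finset.mem_filter] at hJ₁T
  obtain ⟨hJ₁m, hJ₁I⟩ := hJ₁T
  have hmax1 : ∀ K ∈ 𝓘, ¬(J₁ ⊂ K ∧ K ⊂ I) := by
    intro K hK ⟨h1, h2⟩
    exact hJ₁max K (Finset.mem_filter.mpr ⟨hK, h2⟩) h1
  -- split I \ J₁
  obtain ⟨S, hS𝓘, hSpw, hSeq⟩ := hsplit J₁ hJ₁m I hI hJ₁I hmax1
  obtain ⟨x, hxI, hxJ₁⟩ := Finset.exists_of_ssubset hJ₁I
  have hx : x ∈ S.biUnion id := by rw [← hSeq]; exact Finset.mem_sdiff.mpr ⟨hxI, hxJ₁⟩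
  obtain ⟨M, hMS, hxM⟩ := Finset.mem_biUnion.mp hx
  have hM𝓘 : M ∈ 𝓘 := hS𝓘 hMS
  have hMsub : M ⊆ I \ J₁ := by
    rw [hSeq]; intro a ha; exact Finset.mem_biUnion.mpr ⟨M, hMS, ha⟩
  have hJ₁ne : J₁.Nonempty := Finset.nonempty_iff_ne_empty.mpr (fun h => hne (h ▸ hJ₁m))
  obtain ⟨y, hyJ₁⟩ := hJ₁ne
  have hMI : M ⊂ I := by
    refine Finset.ssubset_iff_of_subset (fun a ha => (Finset.mem_sdiff.mp (hMsub ha)).1) |>.mpr ?_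
    exact ⟨y, hJ₁I.1 hyJ₁, fun hyM => (Finset.mem_sdiff.mp (hMsub hyM)).2 hyJ₁⟩
  -- J₂ : maximal among those containing M
  have hT2 : (𝓘.filter (fun K => M ⊆ K ∧ K ⊂ I)).Nonempty :=
    ⟨M, by simp [hM𝓘, hMI]⟩
  obtain ⟨J₂, hJ₂T, hJ₂max⟩ := (by obtain ⟨m, hm⟩ := Finset.exists_maximal hT2; exact ⟨m, hm.1, fun x hx hlt => (not_le_of_gt hlt) (hm.2 hx hlt.le)⟩ : ∃ m ∈ _, ∀ x ∈ _, ¬ m < x)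
  simp only [Finset.mem_filter] at hJ₂T
  obtain ⟨hJ₂m, hMJ₂, hJ₂I⟩ := hJ₂T
  have hmax2 : ∀ K ∈ 𝓘, ¬(J₂ ⊂ K ∧ K ⊂ I) := by
    intro K hK ⟨h1, h2⟩
    exact hJ₂max K (Finset.mem_filter.mpr ⟨hK, hMJ₂.trans h1.subset, h2⟩) h1
  have hne12 : J₁ ≠ J₂ := by
    intro h
    exact (Finset.mem_sdiff.mp (hMsub hxM)).2 (h ▸ hMJ₂ hxM)
  exact ⟨J₁, hJ₁m, J₂, hJ₂m, hne12, ⟨hJ₁I, hmax1⟩, ⟨hJ₂I, hmax2⟩⟩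
end

section
/- (Lemma 5.1, compatibility of collapsing parameters.) Let Z be a finite nonempty set, let 𝓘 be a family of subsets of Z satisfying properties (1)–(3) of the context, and let p be a real number with p > |Z|. Suppose each minimal I ∈ 𝓘 is assigned a real number u_I > 0. Then for every M > 0 there exist a function t : 𝓘 → ℝ with t(Z) = 1 and t(K) > 0 for all K ∈ 𝓘, satisfying t(parent(J))/t(J) > M for every J ∈ 𝓘 with J ≠ Z, and a function u' : ℕ → ℝ, such that for every non-minimal K ∈ 𝓘 and every minimal I ∈ 𝓘 with I ⊆ K one has u_I · ∏_{J ∈ 𝓘, I ⊆ J ⊊ K} (t(parent(J))/t(J))^{(p − |J|)/p} = u'(depth(K)); i.e. the resulting collapsing parameter of K depends only on the depth of K. -/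
open Finset

variable {α : Type*} [DecidableEq α]

lemma bf_comparable {Z : Finset α} {𝓘 : Finset (Finset α)} (h : IsBubbleFamily Z 𝓘)
    {J J₁ J₂ : Finset α} (hJ : J ∈ 𝓘) (h1 : J₁ ∈ 𝓘) (h2 : J₂ ∈ 𝓘)
    (s1 : J ⊆ J₁) (s2 : J ⊆ J₂) : J₁ ⊆ J₂ ∨ J₂ ⊆ J₁ := by
  rcases h.2.2.2.1 J₁ h1 J₂ h2 with hd | hc | hc
  · exfalso
    have : J = ∅ := disjoint_self.mp ((hd.mono s1 s2))
    exact h.2.1 (this ▸ hJ)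
  · exact Or.inl hc
  · exact Or.inr hc

lemma bf_exists_chain {Z : Finset α} {𝓘 : Finset (Finset α)} (h : IsBubbleFamily Z 𝓘) :
    ∀ n : ℕ, ∀ {J : Finset α}, J ∈ 𝓘 → (𝓘.filter fun J' => J ⊂ J').card = n →
      HasChainTo Z 𝓘 J n := by
  intro n
  induction n with
  | zero =>
    intro J hJ hcard
    have hJZ : J = Z := by
      by_contra hne
      have hZm : Z ∈ 𝓘.filter fun J' => J ⊂ J' :=
        mem_filter.mpr ⟨h.2.2.1, ssubset_of_subset_of_ne (h.1 J hJ) hne⟩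
      rw [Finset.card_eq_zero.mp hcard] at hZm
      exact absurd hZm (notMem_empty _)
    exact ⟨fun _ => Z, rfl, hJZ.symm, fun j _ => h.2.2.1, fun j hj => absurd hj (Nat.not_lt_zero _)⟩
  | succ m ih =>
    intro J hJ hcard
    obtain ⟨P, hPmem, hPmin⟩ := Finset.exists_min_image (𝓘.filter fun J' => J ⊂ J')
      Finset.card (by rw [← Finset.card_pos, hcard]; omega)
    obtain ⟨hP𝓘, hJP⟩ := mem_filter.mp hPmem
    have hfil : (𝓘.filter fun J' => P ⊂ J') = (𝓘.filter fun J' => J ⊂ J').erase P := by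
      ext J'
      simp only [mem_filter, mem_erase]
      constructor
      · rintro ⟨hm, hPJ'⟩
        exact ⟨hPJ'.ne', ⟨hm, hJP.trans hPJ'⟩⟩
      · rintro ⟨hne, hm, hJJ'⟩
        refine ⟨hm, ?_⟩
        rcases bf_comparable h hJ hP𝓘 hm hJP.subset hJJ'.subset with hc | hc
        · exact ssubset_of_subset_of_ne hc (Ne.symm hne)
        · exfalso
          have := hPmin J' (mem_filter.mpr ⟨hm, hJJ'⟩)
          have hlt : J'.card < P.card := Finset.card_lt_card (ssubset_of_subset_of_ne hc hne)
          omega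
    have hcardP : (𝓘.filter fun J' => P ⊂ J').card = m := by
      rw [hfil, Finset.card_erase_of_mem hPmem, hcard]
      omega
    obtain ⟨c, hc0, hcm, hcmem, hclt⟩ := ih hP𝓘 hcardP
    refine ⟨fun j => if j ≤ m then c j else J, by simp [hc0], by simp, ?_, ?_⟩
    · intro j hj
      by_cases hjm : j ≤ m
      · simpa [hjm] using hcmem j hjm
      · simpa [hjm] using hJ
    · intro j hj
      rcases Nat.lt_or_ge j m with hjm | hjm
      · have h1 : j + 1 ≤ m := hjm
        have h2 : j ≤ m := le_of_lt hjm
        simpa [h1, h2] using hclt j hjm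
      · have hjeq : j = m := by omega
        subst hjeq
        simp [hcm, hJP]

lemma bf_chain_le {Z : Finset α} {𝓘 : Finset (Finset α)} (h : IsBubbleFamily Z 𝓘)
    {J : Finset α} {n : ℕ} (hch : HasChainTo Z 𝓘 J n) :
    n ≤ (𝓘.filter fun J' => J ⊂ J').card := by
  obtain ⟨c, hc0, hcn, hcmem, hclt⟩ := hch
  have hmono : ∀ i j, i < j → j ≤ n → c j ⊂ c i := by
    intro i j hij hjn
    induction j with
    | zero => omega
    | succ k ih =>
      rcases Nat.lt_succ_iff_lt_or_eq.mp hij with h' | h'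
      · exact (hclt k (by omega)).trans (ih h' (by omega))
      · subst h'; exact hclt i (by omega)
  have : (Finset.range n).card ≤ (𝓘.filter fun J' => J ⊂ J').card := by
    apply Finset.card_le_card_of_injOn c
    · intro j hj
      simp only [Finset.mem_coe, Finset.mem_range] at hj ⊢
      refine mem_filter.mpr ⟨hcmem j (le_of_lt hj), ?_⟩
      rw [← hcn]
      exact hmono j n hj le_rfl
    · intro a ha b hb hab
      rw [Finset.mem_coe, Finset.mem_range] at ha hb
      by_contra hne
      rcases Nat.lt_or_ge a b with hl | hl
      · exact (hmono a b hl (le_of_lt hb)).ne (hab.symm)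
      · exact (hmono b a (by omega) (le_of_lt ha)).ne hab
  simpa using this

lemma bf_depth_eq {Z : Finset α} {𝓘 : Finset (Finset α)} (h : IsBubbleFamily Z 𝓘)
    {J : Finset α} (hJ : J ∈ 𝓘) :
    depth Z 𝓘 J = (𝓘.filter fun J' => J ⊂ J').card := by
  have hmem : (𝓘.filter fun J' => J ⊂ J').card ∈ {n | HasChainTo Z 𝓘 J n} :=
    bf_exists_chain h _ hJ rfl
  have hbdd : BddAbove {n | HasChainTo Z 𝓘 J n} :=
    ⟨(𝓘.filter fun J' => J ⊂ J').card, fun n hn => bf_chain_le h hn⟩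
  exact le_antisymm (csSup_le ⟨_, hmem⟩ fun n hn => bf_chain_le h hn) (le_csSup hbdd hmem)

lemma bf_parent_subset {Z : Finset α} {𝓘 : Finset (Finset α)} (h : IsBubbleFamily Z 𝓘)
    {J P : Finset α} (hJ : J ∈ 𝓘) (hJZ : J ≠ Z) (hP : P ∈ 𝓘) (hJP : J ⊂ P)
    (hd : (𝓘.filter fun J' => P ⊂ J').card = (𝓘.filter fun J' => J ⊂ J').card - 1) :
    ∀ J' ∈ 𝓘, J ⊂ J' → P ⊆ J' := by
  have hPnot : P ∉ (𝓘.filter fun J' => P ⊂ J') := by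
    simp only [mem_filter, not_and]
    intro _
    exact fun hc => hc.ne rfl
  have hsub : insert P (𝓘.filter fun J' => P ⊂ J') ⊆ 𝓘.filter fun J' => J ⊂ J' := by
    intro J' hJ'
    rcases mem_insert.mp hJ' with rfl | hm
    · exact mem_filter.mpr ⟨hP, hJP⟩
    · obtain ⟨hm1, hm2⟩ := mem_filter.mp hm
      exact mem_filter.mpr ⟨hm1, hJP.trans hm2⟩
  have hZm : Z ∈ 𝓘.filter fun J' => J ⊂ J' :=
    mem_filter.mpr ⟨h.2.2.1, ssubset_of_subset_of_ne (h.1 J hJ) hJZ⟩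
  have hpos : 1 ≤ (𝓘.filter fun J' => J ⊂ J').card := Finset.card_pos.mpr ⟨Z, hZm⟩
  have hcard : (𝓘.filter fun J' => J ⊂ J').card ≤ (insert P (𝓘.filter fun J' => P ⊂ J')).card := by
    rw [Finset.card_insert_of_notMem hPnot, hd]
    omega
  have heq := Finset.eq_of_subset_of_card_le hsub hcard
  intro J' hJ'1 hJ'2
  have : J' ∈ insert P (𝓘.filter fun J' => P ⊂ J') := by
    rw [heq]; exact mem_filter.mpr ⟨hJ'1, hJ'2⟩
  rcases mem_insert.mp this with rfl | hm
  · exact Finset.Subset.refl _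
  · exact (mem_filter.mp hm).2.subset

/-- Lemma 5.1, compatibility of collapsing parameters:
given `p > |Z|` and positive collapsing parameters `u I` for the minimal members
`I` of `𝓘`, for every `M > 0` there are scales `t : 𝓘 → ℝ` with `t Z = 1`,
`t K > 0`, parent-to-child ratios `> M`, and a function `u' : ℕ → ℝ` such that
for every non-minimal `K ∈ 𝓘` and every minimal `I ⊆ K`,
`u I * ∏_{J ∈ 𝓘, I ⊆ J ⊊ K} (t (parent J) / t J) ^ ((p − |J|)/p) = u' (depth K)`,
i.e. the resulting collapsing parameter of `K` depends only on the depth of `K`. -/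
theorem collapsing_parameters_compatible (Z : Finset α) (𝓘 : Finset (Finset α))
    (hZ : Z.Nonempty) (h𝓘 : IsBubbleFamily Z 𝓘)
    (p : ℝ) (hp : (Z.card : ℝ) < p)
    (u : Finset α → ℝ) (hu : ∀ I, MinimalMem 𝓘 I → 0 < u I) :
    ∀ M : ℝ, 0 < M →
      ∃ t : Finset α → ℝ, ∃ u' : ℕ → ℝ,
        t Z = 1 ∧ (∀ K ∈ 𝓘, 0 < t K) ∧
        ∀ par : Finset α → Finset α,
          (∀ J ∈ 𝓘, J ≠ Z → par J ∈ 𝓘 ∧ J ⊂ par J ∧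
            depth Z 𝓘 (par J) = depth Z 𝓘 J - 1) →
          (∀ J ∈ 𝓘, J ≠ Z → M < t (par J) / t J) ∧
          (∀ K ∈ 𝓘, ¬ MinimalMem 𝓘 K → ∀ I, MinimalMem 𝓘 I → I ⊆ K →
            u I * ∏ J ∈ 𝓘.filter (fun J => I ⊆ J ∧ J ⊂ K),
              (t (par J) / t J) ^ ((p - (J.card : ℝ)) / p) = u' (depth Z 𝓘 K)) := by
  classical
  intro M hM
  have hZ𝓘 : Z ∈ 𝓘 := h𝓘.2.2.1
  have hp0 : (0 : ℝ) < p := lt_of_le_of_lt (Nat.cast_nonneg _) hp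
  have hp' : p ≠ 0 := ne_of_gt hp0
  have hcardp : ∀ J ∈ 𝓘, (J.card : ℝ) < p := by
    intro J hJ
    exact lt_of_le_of_lt (by exact_mod_cast Finset.card_le_card (h𝓘.1 J hJ)) hp
  set dd : Finset α → ℕ := fun J => (𝓘.filter fun J' => J ⊂ J').card with hdd_def
  set s : ℝ := max M 1 + 1 with hs_def
  have hs1 : 1 < s := by
    have := le_max_right M 1
    simp only [hs_def]; linarith
  have hs0 : (0 : ℝ) < s := lt_trans one_pos hs1
  set Sig : ℝ := ∑ I ∈ 𝓘.filter (fun I => ∀ J ∈ 𝓘, ¬ J ⊂ I), s ^ dd I * u I with hSig_def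
  have htermnn : ∀ I ∈ 𝓘.filter (fun I => ∀ J ∈ 𝓘, ¬ J ⊂ I), 0 ≤ s ^ dd I * u I := by
    intro I hIm
    obtain ⟨h1, h2⟩ := mem_filter.mp hIm
    have := hu I ⟨h1, h2⟩
    exact mul_nonneg (pow_nonneg hs0.le _) this.le
  have hSignn : 0 ≤ Sig := Finset.sum_nonneg htermnn
  set T : ℝ := s * (1 + Sig) with hT_def
  have hT0 : 0 < T := by
    have : (0:ℝ) < 1 + Sig := by linarith
    exact mul_pos hs0 this
  set r : Finset α → ℝ := fun J => if ∀ J' ∈ 𝓘, ¬ J' ⊂ J then T / (s ^ dd J * u J) else s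
    with hr_def
  have hrs : ∀ J ∈ 𝓘, s ≤ r J := by
    intro J hJ
    by_cases hmin : ∀ J' ∈ 𝓘, ¬ J' ⊂ J
    · simp only [hr_def, if_pos hmin]
      have huJ : 0 < u J := hu J ⟨hJ, hmin⟩
      have hterm : 0 < s ^ dd J * u J := mul_pos (pow_pos hs0 _) huJ
      rw [le_div_iff₀ hterm]
      have hmem : J ∈ 𝓘.filter (fun I => ∀ J' ∈ 𝓘, ¬ J' ⊂ I) := mem_filter.mpr ⟨hJ, hmin⟩
      have hle : s ^ dd J * u J ≤ Sig := Finset.single_le_sum htermnn hmem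
      nlinarith
    · simp only [hr_def, if_neg hmin]
      exact le_rfl
  have hr0 : ∀ J ∈ 𝓘, 0 < r J := fun J hJ => lt_of_lt_of_le hs0 (hrs J hJ)
  set ρ : Finset α → ℝ := fun J => r J ^ (p / (p - (J.card : ℝ))) with hρ_def
  have hρ0 : ∀ J ∈ 𝓘, 0 < ρ J := fun J hJ => Real.rpow_pos_of_pos (hr0 J hJ) _
  have hρM : ∀ J ∈ 𝓘, M < ρ J := by
    intro J hJ
    have h1 : 0 < p - (J.card : ℝ) := by linarith [hcardp J hJ]
    have h1' : p - (J.card : ℝ) ≠ 0 := ne_of_gt h1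
    have he0 : 0 < (p - (J.card : ℝ)) / p := div_pos h1 hp0
    have he1 : (p - (J.card : ℝ)) / p ≤ 1 := by
      rw [div_le_one hp0]
      have : (0:ℝ) ≤ (J.card : ℝ) := Nat.cast_nonneg _
      linarith
    have hMe : M ^ ((p - (J.card : ℝ)) / p) < s := by
      rcases le_or_gt M 1 with hM1 | hM1
      · have := Real.rpow_le_one hM.le hM1 he0.le
        linarith
      · have h2 : M ^ ((p - (J.card : ℝ)) / p) ≤ M ^ (1:ℝ) :=
          Real.rpow_le_rpow_of_exponent_le hM1.le he1
        rw [Real.rpow_one] at h2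
        have := le_max_left M 1
        simp only [hs_def]; linarith
    have hMr : M ^ ((p - (J.card : ℝ)) / p) < r J := lt_of_lt_of_le hMe (hrs J hJ)
    have key : (M ^ ((p - (J.card : ℝ)) / p)) ^ (p / (p - (J.card : ℝ)))
        < (r J) ^ (p / (p - (J.card : ℝ))) :=
      Real.rpow_lt_rpow (Real.rpow_nonneg hM.le _) hMr (div_pos hp0 h1)
    have hMeq : (M ^ ((p - (J.card : ℝ)) / p)) ^ (p / (p - (J.card : ℝ))) = M := by
      rw [← Real.rpow_mul hM.le,
        show (p - (J.card : ℝ)) / p * (p / (p - (J.card : ℝ))) = 1 by field_simp,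
        Real.rpow_one]
    rw [hMeq] at key
    exact key
  set t : Finset α → ℝ := fun K => ∏ J' ∈ 𝓘.filter (fun J' => K ⊆ J' ∧ J' ≠ Z), (ρ J')⁻¹
    with ht_def
  clear_value dd s Sig T r ρ t
  have htpos : ∀ K, 0 < t K := by
    intro K
    simp only [ht_def]
    apply Finset.prod_pos
    intro J' hJ'
    exact inv_pos.mpr (hρ0 J' (mem_filter.mp hJ').1)
  have htZ : t Z = 1 := by
    have hemp : 𝓘.filter (fun J' => Z ⊆ J' ∧ J' ≠ Z) = ∅ := by
      apply Finset.filter_eq_empty_iff.mpr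
      intro J' hJ'
      rintro ⟨h1, h2⟩
      exact h2 (Finset.Subset.antisymm (h𝓘.1 J' hJ') h1)
    simp only [ht_def, hemp, Finset.prod_empty]
  have hstep : ∀ J ∈ 𝓘, J ≠ Z → ∀ P, P ∈ 𝓘 → J ⊂ P → dd P = dd J - 1 →
      t P / t J = ρ J := by
    intro J hJ hJZ P hP hJP hdP
    simp only [hdd_def] at hdP
    have hpar := bf_parent_subset h𝓘 hJ hJZ hP hJP hdP
    have hAP : 𝓘.filter (fun J' => J ⊆ J' ∧ J' ≠ Z)
        = insert J (𝓘.filter (fun J' => P ⊆ J' ∧ J' ≠ Z)) := by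
      ext J'
      simp only [mem_filter, mem_insert]
      constructor
      · rintro ⟨h1, h2, h3⟩
        rcases eq_or_ne J' J with rfl | hne
        · exact Or.inl rfl
        · exact Or.inr ⟨h1, hpar J' h1 (ssubset_of_subset_of_ne h2 (Ne.symm hne)), h3⟩
      · rintro (rfl | ⟨h1, h2, h3⟩)
        · exact ⟨hJ, Finset.Subset.refl _, hJZ⟩
        · exact ⟨h1, hJP.subset.trans h2, h3⟩
    have hJnot : J ∉ 𝓘.filter (fun J' => P ⊆ J' ∧ J' ≠ Z) := by
      simp only [mem_filter, not_and]
      intro _ hPJ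
      exact absurd hPJ hJP.not_subset
    have htJ : t J = (ρ J)⁻¹ * t P := by
      simp only [ht_def]
      rw [hAP, Finset.prod_insert hJnot]
    rw [htJ]
    have h1 : ρ J ≠ 0 := ne_of_gt (hρ0 J hJ)
    have h2 : t P ≠ 0 := ne_of_gt (htpos P)
    field_simp
  refine ⟨t, fun n => T / s ^ (n + 1), htZ, fun K _ => htpos K, ?_⟩
  intro par hpar
  have hpar' : ∀ J ∈ 𝓘, J ≠ Z → par J ∈ 𝓘 ∧ J ⊂ par J ∧ dd (par J) = dd J - 1 := by
    intro J hJ hJZ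
    obtain ⟨h1, h2, h3⟩ := hpar J hJ hJZ
    refine ⟨h1, h2, ?_⟩
    have e1 : depth Z 𝓘 (par J) = dd (par J) := by
      simp only [hdd_def]; exact bf_depth_eq h𝓘 h1
    have e2 : depth Z 𝓘 J = dd J := by
      simp only [hdd_def]; exact bf_depth_eq h𝓘 hJ
    rw [e1, e2] at h3
    exact h3
  constructor
  · intro J hJ hJZ
    obtain ⟨h1, h2, h3⟩ := hpar' J hJ hJZ
    rw [hstep J hJ hJZ (par J) h1 h2 h3]
    exact hρM J hJ
  · intro K hK hKnm I hI hIK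
    obtain ⟨hI𝓘, hImin⟩ := hI
    have hIKne : I ≠ K := by rintro rfl; exact hKnm ⟨hI𝓘, hImin⟩
    have hIKss : I ⊂ K := ssubset_of_subset_of_ne hIK hIKne
    have hdepthK : depth Z 𝓘 K = dd K := by
      simp only [hdd_def]; exact bf_depth_eq h𝓘 hK
    rw [hdepthK]
    set F := 𝓘.filter (fun J => I ⊆ J ∧ J ⊂ K) with hF_def
    have hprodeq : ∀ J ∈ F, (t (par J) / t J) ^ ((p - (J.card : ℝ)) / p) = r J := by
      intro J hJmem
      obtain ⟨hJ𝓘, hIJ, hJK⟩ := mem_filter.mp hJmem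
      have hJZ : J ≠ Z := by
        rintro rfl
        exact hJK.not_subset (h𝓘.1 K hK)
      obtain ⟨h1, h2, h3⟩ := hpar' J hJ𝓘 hJZ
      rw [hstep J hJ𝓘 hJZ (par J) h1 h2 h3]
      have hc : 0 < p - (J.card : ℝ) := by linarith [hcardp J hJ𝓘]
      have hc' : p - (J.card : ℝ) ≠ 0 := ne_of_gt hc
      simp only [hρ_def]
      rw [← Real.rpow_mul (hr0 J hJ𝓘).le,
        show p / (p - (J.card : ℝ)) * ((p - (J.card : ℝ)) / p) = 1 by field_simp,
        Real.rpow_one]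
    rw [Finset.prod_congr rfl hprodeq]
    have hIF : I ∈ F := mem_filter.mpr ⟨hI𝓘, Finset.Subset.refl I, hIKss⟩
    have hrI : r I = T / (s ^ dd I * u I) := by
      simp only [hr_def]
      rw [if_pos hImin]
    have herase : ∀ J ∈ F.erase I, r J = s := by
      intro J hJm
      obtain ⟨hne, hJF⟩ := mem_erase.mp hJm
      obtain ⟨hJ𝓘, hIJ, _⟩ := mem_filter.mp hJF
      simp only [hr_def]
      rw [if_neg (fun hall => hall I hI𝓘 (ssubset_of_subset_of_ne hIJ (Ne.symm hne)))]
    rw [← Finset.insert_erase hIF, Finset.prod_insert (Finset.notMem_erase _ _),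
      Finset.prod_congr rfl herase, Finset.prod_const]
    have hfilI : 𝓘.filter (fun J => I ⊆ J) = insert I (𝓘.filter fun J => I ⊂ J) := by
      ext J
      simp only [mem_filter, mem_insert]
      constructor
      · rintro ⟨h1, h2⟩
        rcases eq_or_ne J I with rfl | hne
        · exact Or.inl rfl
        · exact Or.inr ⟨h1, ssubset_of_subset_of_ne h2 (Ne.symm hne)⟩
      · rintro (rfl | ⟨h1, h2⟩)
        · exact ⟨hI𝓘, Finset.Subset.refl _⟩
        · exact ⟨h1, h2.subset⟩
    have hfilK : 𝓘.filter (fun J => K ⊆ J) = insert K (𝓘.filter fun J => K ⊂ J) := by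
      ext J
      simp only [mem_filter, mem_insert]
      constructor
      · rintro ⟨h1, h2⟩
        rcases eq_or_ne J K with rfl | hne
        · exact Or.inl rfl
        · exact Or.inr ⟨h1, ssubset_of_subset_of_ne h2 (Ne.symm hne)⟩
      · rintro (rfl | ⟨h1, h2⟩)
        · exact ⟨hK, Finset.Subset.refl _⟩
        · exact ⟨h1, h2.subset⟩
    have hFd : F = (𝓘.filter fun J => I ⊆ J) \ (𝓘.filter fun J => K ⊆ J) := by
      ext J
      simp only [hF_def, mem_filter, mem_sdiff, not_and]
      constructor
      · rintro ⟨h1, h2, h3⟩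
        exact ⟨⟨h1, h2⟩, fun _ hKJ => h3.not_subset hKJ⟩
      · rintro ⟨⟨h1, h2⟩, hnb⟩
        have hcomp := bf_comparable h𝓘 hI𝓘 h1 hK h2 hIK
        rcases hcomp with hc | hc
        · exact ⟨h1, h2, lt_of_le_not_ge hc (hnb h1)⟩
        · exact absurd hc (hnb h1)
    have hsubKI : (𝓘.filter fun J => K ⊆ J) ⊆ (𝓘.filter fun J => I ⊆ J) := by
      intro J hJm
      obtain ⟨h1, h2⟩ := mem_filter.mp hJm
      exact mem_filter.mpr ⟨h1, hIK.trans h2⟩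
    have hInotmem : I ∉ 𝓘.filter fun J => I ⊂ J := by
      simp only [mem_filter, not_and]
      exact fun _ hc => absurd rfl hc.ne
    have hKnotmem : K ∉ 𝓘.filter fun J => K ⊂ J := by
      simp only [mem_filter, not_and]
      exact fun _ hc => absurd rfl hc.ne
    have hcF : F.card = dd I - dd K := by
      rw [hFd, Finset.card_sdiff_of_subset hsubKI, hfilI, hfilK,
        Finset.card_insert_of_notMem hInotmem, Finset.card_insert_of_notMem hKnotmem]
      simp only [hdd_def]
      omega
    have hdIK : dd K + 1 ≤ dd I := by
      have hsub2 : insert K (𝓘.filter fun J => K ⊂ J) ⊆ 𝓘.filter fun J => I ⊂ J := by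
        intro J hJm
        rcases mem_insert.mp hJm with rfl | hm
        · exact mem_filter.mpr ⟨hK, hIKss⟩
        · obtain ⟨h1, h2⟩ := mem_filter.mp hm
          exact mem_filter.mpr ⟨h1, hIKss.trans h2⟩
      have hle := Finset.card_le_card hsub2
      rw [Finset.card_insert_of_notMem hKnotmem] at hle
      simpa [hdd_def] using hle
    have hcFe : (F.erase I).card = dd I - dd K - 1 := by
      rw [Finset.card_erase_of_mem hIF, hcF]
    rw [hrI, hcFe]
    obtain ⟨k, hk⟩ : ∃ k, dd I = k + (dd K + 1) := ⟨dd I - (dd K + 1), by omega⟩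
    rw [hk, show k + (dd K + 1) - dd K - 1 = k from by omega, pow_add]
    have huI := hu I ⟨hI𝓘, hImin⟩
    have hsne : s ≠ 0 := ne_of_gt hs0
    have hune : u I ≠ 0 := ne_of_gt huI
    field_simp
end

section
/- (Numerical core of Proposition 3.1 and of the hypotheses of Theorem 1.2.) Let d ≥ 1 be an integer and let p, q₁, …, q_d be real numbers with 0 < q₁ ≤ q₂ ≤ ⋯ ≤ q_d and p > 2q_i for every i. Set q = q₁ + ⋯ + q_d and assume q < p. If q₁ < p/4 ≤ q_d, assume moreover that (p + 4q₁)/(5p − 4q₁) > 2q_d/(3p − 2q_d). Then there exist a real number a > 0 and real numbers σ₁, …, σ_d such that for every i = 1, …, d: (q − p)/p < σ_i < 2(q − p)/(3p − 2q_i), and −2q_iσ_i/p < a, and a < 2(q − p)/p − 3σ_i, and a < 2(p − q)/p − 2σ_i(2q_i − p)/p. -/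
open Finset

set_option maxHeartbeats 1000000

/-- Numerical core of Proposition 3.1 and of the hypotheses of
Theorem 1.2: Let `d ≥ 1` and `0 < q₁ ≤ ⋯ ≤ q_d` with `p > 2qᵢ` for all `i`, set
`q = q₁ + ⋯ + q_d` and assume `q < p`. If `q₁ < p/4 ≤ q_d`, assume moreover
`(p + 4q₁)/(5p − 4q₁) > 2q_d/(3p − 2q_d)`. Then there are `a > 0` and
`σ₁, …, σ_d` with, for every `i`:
`(q − p)/p < σᵢ < 2(q − p)/(3p − 2qᵢ)`, `−2qᵢσᵢ/p < a`,
`a < 2(q − p)/p − 3σᵢ`, and `a < 2(p − q)/p − 2σᵢ(2qᵢ − p)/p`. -/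
theorem ricci_decay_parameters (d : ℕ) (hd : 1 ≤ d) (p : ℝ) (q : Fin d → ℝ)
    (hq0 : ∀ i, 0 < q i) (hmono : Monotone q)
    (hp : ∀ i, 2 * q i < p)
    (hsum : (∑ i, q i) < p)
    (hextra : q ⟨0, hd⟩ < p / 4 → p / 4 ≤ q ⟨d - 1, Nat.sub_lt hd one_pos⟩ →
      2 * q ⟨d - 1, Nat.sub_lt hd one_pos⟩ /
          (3 * p - 2 * q ⟨d - 1, Nat.sub_lt hd one_pos⟩) <
        (p + 4 * q ⟨0, hd⟩) / (5 * p - 4 * q ⟨0, hd⟩)) :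
    ∃ a : ℝ, 0 < a ∧ ∃ σ : Fin d → ℝ, ∀ i,
      ((∑ j, q j) - p) / p < σ i ∧
      σ i < 2 * ((∑ j, q j) - p) / (3 * p - 2 * q i) ∧
      -2 * q i * σ i / p < a ∧
      a < 2 * ((∑ j, q j) - p) / p - 3 * σ i ∧
      a < 2 * (p - (∑ j, q j)) / p - 2 * σ i * (2 * q i - p) / p := by
  set qA := q ⟨0, hd⟩ with hqAdef
  set qB := q ⟨d - 1, Nat.sub_lt hd one_pos⟩ with hqBdef
  have hqmin : ∀ i, qA ≤ q i := fun i => hmono (Fin.le_def.mpr (Nat.zero_le _))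
  have hqmax : ∀ i, q i ≤ qB := fun i =>
    hmono (Fin.le_def.mpr (Nat.le_sub_one_of_lt i.2))
  have hA0 : 0 < qA := hq0 _
  have hB0 : 0 < qB := hq0 _
  have hpA : 2 * qA < p := hp _
  have hpB : 2 * qB < p := hp _
  have hp0 : 0 < p := by linarith
  set Q := ∑ i, q i with hQdef
  clear_value qA qB Q
  have ht : 0 < p - Q := by linarith [hsum]
  have hdc : 0 < 3 * p - 2 * qB := by linarith
  have hdM : 0 < 5 * p - 4 * qA := by linarith
  set c := 4 * qB / (3 * p - 2 * qB) with hcdef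
  set M := 2 * (p + 4 * qA) / (5 * p - 4 * qA) with hMdef
  clear_value c M
  have hc0 : 0 < c := by rw [hcdef]; exact div_pos (by linarith) hdc
  have hc1 : c < 1 := by rw [hcdef]; exact (div_lt_one hdc).mpr (by linarith)
  have hcM : c < M := by
    rcases lt_or_ge qB (p / 4) with h | h
    · have h1 : c < 2 / 5 := by
        rw [hcdef, div_lt_div_iff₀ hdc (by norm_num : (0:ℝ) < 5)]
        nlinarith
      have h2 : (2 : ℝ) / 5 < M := by
        rw [hMdef, div_lt_div_iff₀ (by norm_num : (0:ℝ) < 5) hdM]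
        nlinarith
      linarith
    · rcases lt_or_ge qA (p / 4) with h0 | h0
      · have hx := hextra h0 h
        rw [div_lt_div_iff₀ hdc hdM] at hx
        rw [hcdef, hMdef, div_lt_div_iff₀ hdc hdM]
        nlinarith
      · have h2 : (1 : ℝ) ≤ M := by
          rw [hMdef, le_div_iff₀ hdM]; nlinarith
        linarith
  have hcm : c < min 1 M := lt_min hc1 hcM
  set A := (c + min 1 M) / 2 with hAdef
  have hAc : c < A := by rw [hAdef]; linarith
  have hApos : 0 < A := by linarith
  have hA1 : A < 1 := by
    have h := min_le_left 1 M
    rw [hAdef]; linarith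
  have hAM : A < M := by
    have h := min_le_right 1 M
    rw [hAdef]; linarith
  clear_value A
  set a := A * (p - Q) / p with hadef
  clear_value a
  have ha0 : 0 < a := by rw [hadef]; exact div_pos (mul_pos hApos ht) hp0
  have hap : a * p = A * (p - Q) := by
    rw [hadef]; exact div_mul_cancel₀ _ hp0.ne'
  have h1B : 4 * qB < A * (3 * p - 2 * qB) := by
    have := hAc
    rw [hcdef, div_lt_iff₀ hdc] at this
    linarith
  have hMA : A * (5 * p - 4 * qA) < 2 * (p + 4 * qA) := by
    have := hAM
    rw [hMdef, lt_div_iff₀ hdM] at this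
    linarith
  refine ⟨a, ha0, fun i =>
      (max (max ((Q - p) / p) (-(a * p) / (2 * q i)))
          ((a * p - 2 * (p - Q)) / (2 * (p - 2 * q i))) +
        min (2 * (Q - p) / (3 * p - 2 * q i)) ((2 * (Q - p) - a * p) / (3 * p))) / 2,
    fun i => ?_⟩
  beta_reduce
  have hqi0 : 0 < q i := hq0 i
  have hqip : 2 * q i < p := hp i
  have hqiA : qA ≤ q i := hqmin i
  have hqiB : q i ≤ qB := hqmax i
  have hd1 : 0 < 2 * q i := by linarith
  have hd2 : 0 < 2 * (p - 2 * q i) := by linarith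
  have hd3 : 0 < 3 * p - 2 * q i := by linarith
  have hd4 : 0 < 3 * p := by linarith
  have hd5 : 0 < 5 * p - 4 * q i := by linarith
  have hkey1 : 4 * q i < A * (3 * p - 2 * q i) := by
    nlinarith [h1B, mul_nonneg hApos.le (sub_nonneg.mpr hqiB)]
  have hkey2 : A * (5 * p - 4 * q i) < 2 * (p + 4 * q i) := by
    nlinarith [hMA, mul_nonneg hApos.le (sub_nonneg.mpr hqiA)]
  have hkey3 : A * (3 * p - 2 * q i) < 2 * (p + 2 * q i) := by
    nlinarith [mul_lt_mul_of_pos_right hkey2 hd3,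
      mul_pos hp0 (show (0:ℝ) < p - 2 * q i by linarith), hd5, hApos]
  have hap_p : a * p * p = A * (p - Q) * p := by rw [hap]
  have hapq : a * p * q i = A * (p - Q) * q i := by rw [hap]
  -- the six cross inequalities
  have e11 : (Q - p) / p < 2 * (Q - p) / (3 * p - 2 * q i) := by
    rw [div_lt_div_iff₀ hp0 hd3]
    nlinarith [mul_pos ht (show (0:ℝ) < p - 2 * q i by linarith)]
  have e12 : (Q - p) / p < (2 * (Q - p) - a * p) / (3 * p) := by
    rw [div_lt_div_iff₀ hp0 hd4]
    nlinarith [hap_p, mul_pos (mul_pos ht hp0) (show (0:ℝ) < 1 - A by linarith)]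
  have e21 : -(a * p) / (2 * q i) < 2 * (Q - p) / (3 * p - 2 * q i) := by
    rw [div_lt_div_iff₀ hd1 hd3]
    nlinarith [hap_p, hapq,
      mul_pos ht (show (0:ℝ) < A * (3 * p - 2 * q i) - 4 * q i by linarith)]
  have e22 : -(a * p) / (2 * q i) < (2 * (Q - p) - a * p) / (3 * p) := by
    rw [div_lt_div_iff₀ hd1 hd4]
    nlinarith [hap_p, hapq,
      mul_pos ht (show (0:ℝ) < A * (3 * p - 2 * q i) - 4 * q i by linarith)]
  have e31 : (a * p - 2 * (p - Q)) / (2 * (p - 2 * q i)) <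
      2 * (Q - p) / (3 * p - 2 * q i) := by
    rw [div_lt_div_iff₀ hd2 hd3]
    nlinarith [hap_p, hapq,
      mul_pos ht (show (0:ℝ) < 2 * (p + 2 * q i) - A * (3 * p - 2 * q i) by linarith)]
  have e32 : (a * p - 2 * (p - Q)) / (2 * (p - 2 * q i)) <
      (2 * (Q - p) - a * p) / (3 * p) := by
    rw [div_lt_div_iff₀ hd2 hd4]
    nlinarith [hap_p, hapq,
      mul_pos ht (show (0:ℝ) < 2 * (p + 4 * q i) - A * (5 * p - 4 * q i) by linarith)]
  have hLU : max (max ((Q - p) / p) (-(a * p) / (2 * q i)))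
      ((a * p - 2 * (p - Q)) / (2 * (p - 2 * q i))) <
      min (2 * (Q - p) / (3 * p - 2 * q i)) ((2 * (Q - p) - a * p) / (3 * p)) :=
    max_lt (max_lt (lt_min e11 e12) (lt_min e21 e22)) (lt_min e31 e32)
  set σi : ℝ := (max (max ((Q - p) / p) (-(a * p) / (2 * q i)))
      ((a * p - 2 * (p - Q)) / (2 * (p - 2 * q i))) +
    min (2 * (Q - p) / (3 * p - 2 * q i)) ((2 * (Q - p) - a * p) / (3 * p))) / 2
    with hσdef
  clear_value σi
  have hσL : max (max ((Q - p) / p) (-(a * p) / (2 * q i)))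
      ((a * p - 2 * (p - Q)) / (2 * (p - 2 * q i))) < σi := by
    rw [hσdef]; linarith
  have hσU : σi < min (2 * (Q - p) / (3 * p - 2 * q i))
      ((2 * (Q - p) - a * p) / (3 * p)) := by
    rw [hσdef]; linarith
  have hl1 : (Q - p) / p < σi :=
    lt_of_le_of_lt ((le_max_left _ _).trans (le_max_left _ _)) hσL
  have hl2 : -(a * p) / (2 * q i) < σi :=
    lt_of_le_of_lt ((le_max_right _ _).trans (le_max_left _ _)) hσL
  have hl3 : (a * p - 2 * (p - Q)) / (2 * (p - 2 * q i)) < σi :=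
    lt_of_le_of_lt (le_max_right _ _) hσL
  have hu1 : σi < 2 * (Q - p) / (3 * p - 2 * q i) :=
    hσU.trans_le (min_le_left _ _)
  have hu2 : σi < (2 * (Q - p) - a * p) / (3 * p) :=
    hσU.trans_le (min_le_right _ _)
  rw [div_lt_iff₀ hd1] at hl2
  rw [div_lt_iff₀ hd2] at hl3
  rw [lt_div_iff₀ hd4] at hu2
  clear hσdef hσL hσU hLU e11 e12 e21 e22 e31 e32 hextra hmono hq0 hp
  clear hqmin hqmax hcdef hMdef hAdef hadef hcm hcM hc0 hc1 hqAdef hqBdef hQdef hsum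
  refine ⟨hl1, hu1, ?_, ?_, ?_⟩
  · rw [div_lt_iff₀ hp0]
    linarith [hl2]
  · rw [lt_sub_iff_add_lt, lt_div_iff₀ hp0]
    nlinarith [hu2]
  · rw [div_sub_div_same, lt_div_iff₀ hp0]
    nlinarith [hl3]
end
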